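/- In a subcubic graph G with edge weights w, any two distinct problematic squares of G are vertex-disjoint. -/

import Mathlib

/-!
Two distinct problematic squares share no edge. Sharing exactly one edge would make both
unproblematic, and sharing exactly two would make the one of smaller weight unproblematic. Three
shared edges form a path of length three in both 4-cycles, and each cycle is closed by the same
fourth edge, so the squares would coincide. Finally, a common vertex of two edge-disjoint squares
is incident with two edges of each, hence has degree at least four.
-/

open Finset
open scoped Classical

namespace Paper

variable {V : Type*}

/-- `(a, b, c, d)` is a square (cycle of length 4) of `G`. -/
def IsSquare4 (G : SimpleGraph V) (a b c d : V) : Prop :=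
  a ≠ b ∧ a ≠ c ∧ a ≠ d ∧ b ≠ c ∧ b ≠ d ∧ c ≠ d ∧
  G.Adj a b ∧ G.Adj b c ∧ G.Adj c d ∧ G.Adj d a

/-- The four native edges of the square `(a, b, c, d)`. -/
def sqEdges [DecidableEq V] (a b c d : V) : Finset (Sym2 V) :=
  {s(a, b), s(b, c), s(c, d), s(d, a)}

/-- No square of `G` has all four of its native edges in `M`. -/
def SquareFree [DecidableEq V] (G : SimpleGraph V) (M : Finset (Sym2 V)) : Prop :=
  ∀ a b c d : V, IsSquare4 G a b c d → ¬ sqEdges a b c d ⊆ M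

/-- The square `(a, b, c, d)` is unproblematic: there is another square `s'`
such that either they share exactly one edge, or they share two edges and
`w(s) ≤ w(s')`. -/
def SqUnprob [DecidableEq V] (G : SimpleGraph V) (w : Sym2 V → ℝ) (a b c d : V) : Prop :=
  ∃ a' b' c' d' : V, IsSquare4 G a' b' c' d' ∧ sqEdges a' b' c' d' ≠ sqEdges a b c d ∧
    ((sqEdges a b c d ∩ sqEdges a' b' c' d').card = 1 ∨
     ((sqEdges a b c d ∩ sqEdges a' b' c' d').card = 2 ∧
       ∑ e ∈ sqEdges a b c d, w e ≤ ∑ e ∈ sqEdges a' b' c' d', w e))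

/-- The square `(a, b, c, d)` is problematic. -/
def ProblemSq [DecidableEq V] (G : SimpleGraph V) (w : Sym2 V → ℝ) (a b c d : V) : Prop :=
  IsSquare4 G a b c d ∧ ¬ SqUnprob G w a b c d

variable {G : SimpleGraph V} {a b c d p q r t v : V}

lemma IsSquare4.rotate (hs : IsSquare4 G a b c d) : IsSquare4 G b c d a := by
  obtain ⟨hab, hac, had, hbc, hbd, hcd, h₁, h₂, h₃, h₄⟩ := hs
  exact ⟨hbc, hbd, hab.symm, hcd, hac.symm, had.symm, h₂, h₃, h₄, h₁⟩

section SquareEdges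

open SimpleGraph

variable [DecidableEq V]

lemma mem_sqEdges {e : Sym2 V} :
    e ∈ sqEdges a b c d ↔ e = s(a, b) ∨ e = s(b, c) ∨ e = s(c, d) ∨ e = s(d, a) := by
  simp [sqEdges]

lemma sqEdges_rotate (a b c d : V) : sqEdges a b c d = sqEdges b c d a := by
  ext e
  simp only [mem_sqEdges]
  tauto

namespace IsSquare4

lemma card_sqEdges (hs : IsSquare4 G a b c d) : #(sqEdges a b c d) = 4 := by
  obtain ⟨hab, hac, had, hbc, hbd, hcd, -⟩ := hs
  rw [sqEdges, card_insert_of_notMem, card_insert_of_notMem, card_insert_of_notMem,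
    card_singleton] <;> simp <;> tauto

lemma mem_sqEdges_of_path {x y z u : V} (hs : IsSquare4 G p q r t) (hxz : x ≠ z) (hyu : y ≠ u)
    (hxy : s(x, y) ∈ sqEdges p q r t) (hyz : s(y, z) ∈ sqEdges p q r t)
    (hzu : s(z, u) ∈ sqEdges p q r t) :
    s(u, x) ∈ sqEdges p q r t := by
  obtain ⟨hpq, hpr, hpt, hqr, hqt, hrt, -⟩ := hs
  simp only [mem_sqEdges, Sym2.eq_iff] at hxy hyz hzu ⊢
  rcases hxy with (⟨rfl, rfl⟩ | ⟨rfl, rfl⟩) | (⟨rfl, rfl⟩ | ⟨rfl, rfl⟩) |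
    (⟨rfl, rfl⟩ | ⟨rfl, rfl⟩) | (⟨rfl, rfl⟩ | ⟨rfl, rfl⟩) <;>
  rcases hyz with (⟨h₁, rfl⟩ | ⟨h₁, rfl⟩) | (⟨h₁, rfl⟩ | ⟨h₁, rfl⟩) |
    (⟨h₁, rfl⟩ | ⟨h₁, rfl⟩) | (⟨h₁, rfl⟩ | ⟨h₁, rfl⟩) <;>
  rcases hzu with (⟨h₂, rfl⟩ | ⟨h₂, rfl⟩) | (⟨h₂, rfl⟩ | ⟨h₂, rfl⟩) |
    (⟨h₂, rfl⟩ | ⟨h₂, rfl⟩) | (⟨h₂, rfl⟩ | ⟨h₂, rfl⟩) <;>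
  simp_all

lemma mem_sqEdges_of_three_le_card_inter (hs : IsSquare4 G a b c d) (hs' : IsSquare4 G p q r t)
    (h3 : 3 ≤ #(sqEdges a b c d ∩ sqEdges p q r t)) : s(d, a) ∈ sqEdges p q r t := by
  by_contra hda
  have hsub : sqEdges a b c d ∩ sqEdges p q r t ⊆ (sqEdges a b c d).erase s(d, a) :=
    fun e he ↦ mem_erase.2 ⟨fun h ↦ hda (h ▸ (mem_inter.1 he).2), (mem_inter.1 he).1⟩
  have heq := eq_of_subset_of_card_le hsub <| by
    rw [card_erase_of_mem (by simp [mem_sqEdges]), hs.card_sqEdges]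
    omega
  have hmem : ∀ e, e ∈ sqEdges a b c d → e ≠ s(d, a) → e ∈ sqEdges p q r t :=
    fun e he hne ↦ (mem_inter.1 (heq ▸ mem_erase.2 ⟨hne, he⟩)).2
  obtain ⟨hab, hac, had, hbc, hbd, hcd, -⟩ := hs
  -- the other three edges form the path `a b c d` in the second square, which closes it up
  refine hda (hs'.mem_sqEdges_of_path hac hbd ?_ ?_ ?_) <;> apply hmem <;>
    simp [mem_sqEdges] <;> tauto

lemma sqEdges_eq_of_three_le_card_inter (hs : IsSquare4 G a b c d) (hs' : IsSquare4 G p q r t)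
    (h3 : 3 ≤ #(sqEdges a b c d ∩ sqEdges p q r t)) : sqEdges a b c d = sqEdges p q r t := by
  have hab : s(a, b) ∈ sqEdges p q r t :=
    hs.rotate.mem_sqEdges_of_three_le_card_inter hs' (by rwa [← sqEdges_rotate])
  have hbc : s(b, c) ∈ sqEdges p q r t :=
    hs.rotate.rotate.mem_sqEdges_of_three_le_card_inter hs' <| by
      rwa [← sqEdges_rotate b c d a, ← sqEdges_rotate]
  have hcd : s(c, d) ∈ sqEdges p q r t :=
    hs.rotate.rotate.rotate.mem_sqEdges_of_three_le_card_inter hs' <| by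
      rwa [← sqEdges_rotate c d a b, ← sqEdges_rotate b c d a, ← sqEdges_rotate]
  have hda := hs.mem_sqEdges_of_three_le_card_inter hs' h3
  refine eq_of_subset_of_card_le (fun e he ↦ ?_) (by rw [hs.card_sqEdges, hs'.card_sqEdges])
  rcases mem_sqEdges.1 he with rfl | rfl | rfl | rfl <;> assumption

lemma two_le_card_sqEdges_inter_incidenceFinset [Fintype (G.neighborSet v)]
    (hs : IsSquare4 G a b c d) (hv : v ∈ ({a, b, c, d} : Finset V)) :
    2 ≤ #(sqEdges a b c d ∩ G.incidenceFinset v) := by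
  obtain ⟨hab, hac, had, hbc, hbd, hcd, h₁, h₂, h₃, h₄⟩ := hs
  simp only [mem_insert, mem_singleton] at hv
  rcases hv with rfl | rfl | rfl | rfl
  · exact one_lt_card.2 ⟨s(v, b), by simp [mem_sqEdges, *],
      s(d, v), by simp [mem_sqEdges, mk'_mem_incidenceSet_right_iff, *], by simp; tauto⟩
  · exact one_lt_card.2 ⟨s(a, v), by simp [mem_sqEdges, mk'_mem_incidenceSet_right_iff, *],
      s(v, c), by simp [mem_sqEdges, *], by simp; tauto⟩
  · exact one_lt_card.2 ⟨s(b, v), by simp [mem_sqEdges, mk'_mem_incidenceSet_right_iff, *],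
      s(v, d), by simp [mem_sqEdges, *], by simp; tauto⟩
  · exact one_lt_card.2 ⟨s(c, v), by simp [mem_sqEdges, mk'_mem_incidenceSet_right_iff, *],
      s(v, a), by simp [mem_sqEdges, *], by simp; tauto⟩

lemma four_le_degree_of_disjoint_sqEdges [Fintype (G.neighborSet v)] (hs : IsSquare4 G a b c d)
    (hs' : IsSquare4 G p q r t) (hdisj : Disjoint (sqEdges a b c d) (sqEdges p q r t))
    (hv : v ∈ ({a, b, c, d} : Finset V)) (hv' : v ∈ ({p, q, r, t} : Finset V)) :
    4 ≤ G.degree v := by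
  have hsub : (sqEdges a b c d ∩ G.incidenceFinset v) ∪ (sqEdges p q r t ∩ G.incidenceFinset v)
      ⊆ G.incidenceFinset v :=
    union_subset inter_subset_right inter_subset_right
  have hcard := card_le_card hsub
  rw [card_union_of_disjoint (hdisj.mono inter_subset_left inter_subset_left),
    card_incidenceFinset_eq_degree] at hcard
  have := hs.two_le_card_sqEdges_inter_incidenceFinset hv
  have := hs'.two_le_card_sqEdges_inter_incidenceFinset hv'
  omega

end IsSquare4

end SquareEdges

namespace ProblemSq

variable [DecidableEq V] {w : Sym2 V → ℝ}

lemma card_inter_ne_one (hp : ProblemSq G w a b c d) (hs' : IsSquare4 G p q r t)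
    (hne : sqEdges p q r t ≠ sqEdges a b c d) : #(sqEdges a b c d ∩ sqEdges p q r t) ≠ 1 :=
  fun h ↦ hp.2 ⟨p, q, r, t, hs', hne, Or.inl h⟩

lemma sum_lt_of_card_inter_eq_two (hp : ProblemSq G w a b c d) (hs' : IsSquare4 G p q r t)
    (hne : sqEdges p q r t ≠ sqEdges a b c d) (h2 : #(sqEdges a b c d ∩ sqEdges p q r t) = 2) :
    ∑ e ∈ sqEdges p q r t, w e < ∑ e ∈ sqEdges a b c d, w e :=
  lt_of_not_ge fun hle ↦ hp.2 ⟨p, q, r, t, hs', hne, Or.inr ⟨h2, hle⟩⟩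

lemma disjoint_sqEdges (hp : ProblemSq G w a b c d) (hp' : ProblemSq G w p q r t)
    (hne : sqEdges a b c d ≠ sqEdges p q r t) : Disjoint (sqEdges a b c d) (sqEdges p q r t) := by
  have h1 := hp.card_inter_ne_one hp'.1 hne.symm
  have h2 : #(sqEdges a b c d ∩ sqEdges p q r t) ≠ 2 := fun h2 ↦
    (hp.sum_lt_of_card_inter_eq_two hp'.1 hne.symm h2).asymm
      (hp'.sum_lt_of_card_inter_eq_two hp.1 hne (by rwa [inter_comm]))
  have h3 : ¬ 3 ≤ #(sqEdges a b c d ∩ sqEdges p q r t) :=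
    fun h3 ↦ hne (hp.1.sqEdges_eq_of_three_le_card_inter hp'.1 h3)
  rw [disjoint_iff_inter_eq_empty, ← card_eq_zero]
  omega

end ProblemSq

/-- In a subcubic graph `G` with edge weights `w`, any two
distinct problematic squares of `G` are vertex-disjoint. -/
theorem problematic_squares_disjoint {V : Type*} [Fintype V] [DecidableEq V]
    (G : SimpleGraph V) [DecidableRel G.Adj]
    (hsub : ∀ v : V, G.degree v ≤ 3) (w : Sym2 V → ℝ)
    (a b c d a' b' c' d' : V)
    (hp : ProblemSq G w a b c d) (hp' : ProblemSq G w a' b' c' d')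
    (hne : sqEdges a b c d ≠ sqEdges a' b' c' d') :
    Disjoint ({a, b, c, d} : Finset V) ({a', b', c', d'} : Finset V) := by
  refine disjoint_left.2 fun v hv hv' ↦ ?_
  have h4 := hp.1.four_le_degree_of_disjoint_sqEdges hp'.1 (hp.disjoint_sqEdges hp' hne) hv hv'
  have h3 := hsub v
  omega

end Paper
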